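/- Let u ∈ ℝ^n satisfy ∑_{j=1}^n u_j = n and u_j ≥ 1/2 for all j. Then 0 ≤ Δ12(u) ≤ 2(ln(n) + 1)·n·δ(u). -/

import Mathlib

/-- The entropy proximity measure `δ(u) = (1/n) ∑ u_j ln u_j`. -/
noncomputable def entropyDelta (n : ℕ) (u : Fin n → ℝ) : ℝ :=
  (1 / (n : ℝ)) * ∑ j, u j * Real.log (u j)

/-- `Δ12(u) = ∑ u_j ln² u_j`. -/
noncomputable def Delta12 (n : ℕ) (u : Fin n → ℝ) : ℝ :=
  ∑ j, u j * Real.log (u j) ^ 2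

/-
With `klFun x = x log x + 1 - x ≥ 0`, the constraint `∑ u_j = n` gives `∑ klFun u_j = n δ(u)`,
so it suffices to show `x log² x ≤ 2 (log N + 1) klFun x` for `0 < x ≤ N`, `1 ≤ N` (each `u_j ≤ n`).
This follows from `x log² x ≤ 2 klFun x` for `x ≤ 1` and `x log² x ≤ (log x + 2) klFun x` for
`x ≥ 1`: in both cases the difference vanishes at `1` and has derivative `-log² x`,
resp. `klFun x / x ≥ 0`.
-/

open Real InformationTheory Set Finset

lemma hasDerivAt_two_mul_klFun_sub_mul_log_sq {x : ℝ} (hx : 0 < x) :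
    HasDerivAt (fun y ↦ 2 * klFun y - y * log y ^ 2) (-log x ^ 2) x := by
  have h := ((hasDerivAt_klFun hx.ne').const_mul 2).sub
    ((hasDerivAt_id x).mul ((hasDerivAt_log hx.ne').pow 2))
  refine h.congr_deriv ?_
  simp only [Pi.pow_apply, id]
  field_simp
  ring

lemma hasDerivAt_log_add_two_mul_klFun_sub_mul_log_sq {x : ℝ} (hx : 0 < x) :
    HasDerivAt (fun y ↦ (log y + 2) * klFun y - y * log y ^ 2) (klFun x / x) x := by
  have h := (((hasDerivAt_log hx.ne').add_const 2).mul (hasDerivAt_klFun hx.ne')).sub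
    ((hasDerivAt_id x).mul ((hasDerivAt_log hx.ne').pow 2))
  refine h.congr_deriv ?_
  simp only [Pi.pow_apply, id]
  field_simp
  ring

lemma mul_log_sq_le_two_mul_klFun {x : ℝ} (hx : 0 < x) (hx1 : x ≤ 1) :
    x * log x ^ 2 ≤ 2 * klFun x := by
  have hanti : AntitoneOn (fun y ↦ 2 * klFun y - y * log y ^ 2) (Ioi 0) := by
    refine antitoneOn_of_hasDerivWithinAt_nonpos (convex_Ioi 0)
      (fun y hy ↦ (hasDerivAt_two_mul_klFun_sub_mul_log_sq hy).continuousAt.continuousWithinAt)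
      (fun y hy ↦ ?_) (fun y _ ↦ neg_nonpos.mpr (sq_nonneg (log y)))
    rw [interior_Ioi] at hy ⊢
    exact (hasDerivAt_two_mul_klFun_sub_mul_log_sq hy).hasDerivWithinAt
  have := hanti hx (zero_lt_one' ℝ) hx1
  simp only [klFun_one, log_one] at this
  linarith

lemma mul_log_sq_le_log_add_two_mul_klFun {x : ℝ} (hx : 1 ≤ x) :
    x * log x ^ 2 ≤ (log x + 2) * klFun x := by
  have hmono : MonotoneOn (fun y ↦ (log y + 2) * klFun y - y * log y ^ 2) (Ioi 0) := by
    refine monotoneOn_of_hasDerivWithinAt_nonneg (convex_Ioi 0) (f' := fun y ↦ klFun y / y)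
      (fun y hy ↦
        (hasDerivAt_log_add_two_mul_klFun_sub_mul_log_sq hy).continuousAt.continuousWithinAt)
      (fun y hy ↦ ?_) (fun y hy ↦ ?_)
    · rw [interior_Ioi] at hy ⊢
      exact (hasDerivAt_log_add_two_mul_klFun_sub_mul_log_sq hy).hasDerivWithinAt
    · rw [interior_Ioi] at hy
      exact div_nonneg (klFun_nonneg hy.le) hy.le
  have := hmono (zero_lt_one' ℝ) (zero_lt_one.trans_le hx) hx
  simp only [klFun_one, log_one] at this
  linarith

lemma mul_log_sq_le_mul_klFun_of_le {x N : ℝ} (hx : 0 < x) (hxN : x ≤ N) (hN : 1 ≤ N) :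
    x * log x ^ 2 ≤ 2 * (log N + 1) * klFun x := by
  have hkl := klFun_nonneg hx.le
  rcases le_total x 1 with hx1 | hx1
  · have := log_nonneg hN
    calc x * log x ^ 2 ≤ 2 * klFun x := mul_log_sq_le_two_mul_klFun hx hx1
      _ ≤ 2 * (log N + 1) * klFun x := by nlinarith
  · have := log_le_log hx hxN
    have := log_nonneg hx1
    calc x * log x ^ 2 ≤ (log x + 2) * klFun x := mul_log_sq_le_log_add_two_mul_klFun hx1
      _ ≤ 2 * (log N + 1) * klFun x := by nlinarith

lemma sum_klFun_eq_sum_mul_log {ι : Type*} [Fintype ι] {u : ι → ℝ}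
    (hsum : ∑ i, u i = Fintype.card ι) :
    ∑ i, klFun (u i) = ∑ i, u i * log (u i) := by
  simp only [klFun_apply, sum_sub_distrib, sum_add_distrib, hsum, sum_const, card_univ,
    nsmul_eq_mul, mul_one, add_sub_cancel_right]

lemma natCast_mul_entropyDelta (n : ℕ) (u : Fin n → ℝ) :
    n * entropyDelta n u = ∑ j, u j * log (u j) := by
  rcases n.eq_zero_or_pos with rfl | hn
  · simp
  · rw [entropyDelta, ← mul_assoc, mul_one_div_cancel (by positivity), one_mul]

theorem stmt_8_general (n : ℕ) (u : Fin n → ℝ) (hsum : ∑ j, u j = (n : ℝ))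
    (hlb : ∀ j, 1 / 2 ≤ u j) :
    0 ≤ Delta12 n u ∧ Delta12 n u ≤ 2 * (Real.log n + 1) * n * entropyDelta n u := by
  have hpos : ∀ j, 0 < u j := fun j ↦ by linarith [hlb j]
  refine ⟨sum_nonneg fun j _ ↦ by have := hpos j; positivity, ?_⟩
  rw [mul_assoc, natCast_mul_entropyDelta,
    ← sum_klFun_eq_sum_mul_log (by simpa using hsum), mul_sum, Delta12]
  refine sum_le_sum fun j _ ↦ mul_log_sq_le_mul_klFun_of_le (hpos j) ?_ ?_
  · exact hsum ▸ single_le_sum (fun i _ ↦ (hpos i).le) (mem_univ j)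
  · exact_mod_cast j.pos

theorem stmt_8 (n : ℕ) (hn : 1 ≤ n) (u : Fin n → ℝ) (hsum : ∑ j, u j = (n : ℝ))
    (hlb : ∀ j, 1 / 2 ≤ u j) :
    0 ≤ Delta12 n u ∧ Delta12 n u ≤ 2 * (Real.log n + 1) * n * entropyDelta n u :=
  stmt_8_general n u hsum hlb
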